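/- Let 1/2 < β < 1 and let (a_j) be a nonnegative sequence with a_j ~ j^{-β} as j → ∞ (and a_0 arbitrary nonnegative). Then there exists a constant c_β > 0 (namely c_β = ∫_0^∞ x^{-β}(1+x)^{-β} dx) such that γ_i := Σ_{j=0}^∞ a_j a_{i+j} ~ c_β i^{1-2β} as i → ∞. In particular Σ_{i=1}^∞ γ_i = ∞. -/

import Mathlib

open Filter MeasureTheory
open Set

noncomputable def fβ (β : ℝ) (x : ℝ) : ℝ := x ^ (-β) * (1 + x) ^ (-β)

variable {β : ℝ}

lemma contf (hβ0 : 0 < β) : ContinuousOn (fβ β) (Ioi 0) := by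
  intro x hx
  have h1 : ContinuousAt (fun x : ℝ => x ^ (-β)) x :=
    Real.continuousAt_rpow_const x (-β) (Or.inl (ne_of_gt hx))
  have h2 : ContinuousAt (fun x : ℝ => (1 + x) ^ (-β)) x := by
    have : ContinuousAt (fun y : ℝ => y ^ (-β)) (1 + x) :=
      Real.continuousAt_rpow_const _ (-β) (Or.inl (by have hx' : (0:ℝ) < x := hx; positivity))
    exact this.comp (by fun_prop)
  exact ((h1.mul h2).continuousWithinAt : ContinuousWithinAt (fun x : ℝ => x ^ (-β) * (1 + x) ^ (-β)) (Ioi 0) x)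

lemma fnonneg (x : ℝ) (hx : 0 ≤ x) : 0 ≤ fβ β x := by
  have := Real.rpow_nonneg hx (-β)
  have := Real.rpow_nonneg (by linarith : (0:ℝ) ≤ 1 + x) (-β)
  simp only [fβ]; positivity

lemma fanti (hβ0 : 0 < β) : AntitoneOn (fβ β) (Ioi 0) := by
  intro x hx y hy hxy
  simp only [mem_Ioi] at hx hy
  simp only [fβ]
  apply mul_le_mul
  · exact Real.rpow_le_rpow_of_nonpos hx hxy (by linarith)
  · exact Real.rpow_le_rpow_of_nonpos (by linarith) (by linarith) (by linarith)
  · exact Real.rpow_nonneg (by linarith) _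
  · exact Real.rpow_nonneg hx.le _

lemma fint (hβ : 1/2 < β) (hβ1 : β < 1) : IntegrableOn (fβ β) (Ioi 0) := by
  have hβ0 : 0 < β := by linarith
  have h01 : IntegrableOn (fβ β) (Ioc 0 1) := by
    have hint : IntegrableOn (fun x : ℝ => x ^ (-β)) (Ioc (0:ℝ) 1) :=
      (intervalIntegral.intervalIntegrable_rpow' (by linarith : (-1:ℝ) < -β) (a := 0) (b := 1)).1
    refine Integrable.mono' hint ?_ ?_
    · exact ((contf hβ0).mono Ioc_subset_Ioi_self).aestronglyMeasurable measurableSet_Ioc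
    · filter_upwards [ae_restrict_mem measurableSet_Ioc] with x hx
      rw [Real.norm_eq_abs, abs_of_nonneg (fnonneg x hx.1.le)]
      simp only [fβ]
      calc x ^ (-β) * (1 + x) ^ (-β) ≤ x ^ (-β) * 1 := by
            apply mul_le_mul_of_nonneg_left _ (Real.rpow_nonneg hx.1.le _)
            exact Real.rpow_le_one_of_one_le_of_nonpos (by linarith [hx.1]) (by linarith)
        _ = x ^ (-β) := mul_one _
  have h1i : IntegrableOn (fβ β) (Ioi 1) := by
    have hint : IntegrableOn (fun x : ℝ => x ^ (-β + -β)) (Ioi (1:ℝ)) :=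
      integrableOn_Ioi_rpow_of_lt (by linarith) one_pos
    refine Integrable.mono' hint ?_ ?_
    · exact ((contf hβ0).mono (Ioi_subset_Ioi zero_le_one)).aestronglyMeasurable measurableSet_Ioi
    · filter_upwards [ae_restrict_mem measurableSet_Ioi] with x hx
      simp only [mem_Ioi] at hx
      rw [Real.norm_eq_abs, abs_of_nonneg (fnonneg x (by linarith))]
      simp only [fβ]
      rw [Real.rpow_add (by linarith : (0:ℝ) < x)]
      apply mul_le_mul_of_nonneg_left _ (Real.rpow_nonneg (by linarith) _)
      exact Real.rpow_le_rpow_of_nonpos (by linarith) (by linarith) (by linarith)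
  have := h01.union h1i
  rwa [Ioc_union_Ioi_eq_Ioi zero_le_one] at this

lemma cpos (hβ : 1/2 < β) (hβ1 : β < 1) : 0 < ∫ x in Ioi (0:ℝ), fβ β x := by
  have hβ0 : 0 < β := by linarith
  have key : (2:ℝ) ^ (-β) * 3 ^ (-β) * 1 ≤ ∫ x in Ioc (1:ℝ) 2, fβ β x := by
    have heq : ∫ x in Ioc (1:ℝ) 2, (2:ℝ) ^ (-β) * 3 ^ (-β) = (2:ℝ) ^ (-β) * 3 ^ (-β) * 1 := by
      rw [setIntegral_const]
      rw [Real.volume_real_Ioc, smul_eq_mul]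
      norm_num
    rw [← heq]
    apply setIntegral_mono_on
    · exact integrableOn_const (by simp [Real.volume_Ioc])
    · exact (fint hβ hβ1).mono_set (fun x hx => lt_trans one_pos hx.1)
    · exact measurableSet_Ioc
    · intro x hx
      simp only [fβ]
      apply mul_le_mul
      · exact Real.rpow_le_rpow_of_nonpos (by linarith [hx.1]) hx.2 (by linarith)
      · exact Real.rpow_le_rpow_of_nonpos (by linarith [hx.1]) (by linarith [hx.2]) (by linarith)
      · exact Real.rpow_nonneg (by norm_num) _
      · exact Real.rpow_nonneg (by linarith [hx.1]) _
  have hsub : ∫ x in Ioc (1:ℝ) 2, fβ β x ≤ ∫ x in Ioi (0:ℝ), fβ β x := by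
    apply setIntegral_mono_set (fint hβ hβ1)
    · filter_upwards [ae_restrict_mem measurableSet_Ioi] with x hx
      exact fnonneg x (le_of_lt hx)
    · exact HasSubset.Subset.eventuallyLE (fun x hx => lt_trans one_pos hx.1)
  have h2 : (0:ℝ) < 2 ^ (-β) * 3 ^ (-β) * 1 := by positivity
  linarith

lemma step_le (hβ : 1/2 < β) (hβ1 : β < 1) {i : ℕ} (hi : 1 ≤ i) (j : ℕ) :
    fβ β (((j:ℝ)+1)/i) * (1/(i:ℝ)) ≤ ∫ x in Ioc ((j:ℝ)/i) (((j:ℝ)+1)/i), fβ β x := by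
  have hβ0 : 0 < β := by linarith
  have hi' : (0:ℝ) < i := by exact_mod_cast hi
  have hlen : ((j:ℝ)+1)/i - (j:ℝ)/i = 1/i := by field_simp; ring
  have hconst : ∫ _x in Ioc ((j:ℝ)/i) (((j:ℝ)+1)/i), fβ β (((j:ℝ)+1)/i)
      = fβ β (((j:ℝ)+1)/i) * (1/(i:ℝ)) := by
    rw [setIntegral_const, Real.volume_real_Ioc_of_le (by rw [← sub_nonneg, hlen]; positivity), smul_eq_mul,
      hlen, mul_comm]
  rw [← hconst]
  apply setIntegral_mono_on
  · exact integrableOn_const (by rw [Real.volume_Ioc]; exact ENNReal.ofReal_ne_top)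
  · exact (fint hβ hβ1).mono_set (fun x hx => lt_of_le_of_lt (by positivity) hx.1)
  · exact measurableSet_Ioc
  · intro x hx
    exact fanti hβ0 (mem_Ioi.2 (lt_of_le_of_lt (by positivity : (0:ℝ) ≤ (j:ℝ)/i) hx.1))
      (mem_Ioi.2 (by positivity)) hx.2

lemma le_step (hβ : 1/2 < β) (hβ1 : β < 1) {i : ℕ} (hi : 1 ≤ i) (j : ℕ) :
    ∫ x in Ioc (((j:ℝ)+1)/i) (((j:ℝ)+2)/i), fβ β x ≤ fβ β (((j:ℝ)+1)/i) * (1/(i:ℝ)) := by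
  have hβ0 : 0 < β := by linarith
  have hi' : (0:ℝ) < i := by exact_mod_cast hi
  have hlen : ((j:ℝ)+2)/i - ((j:ℝ)+1)/i = 1/i := by field_simp; ring
  have hconst : ∫ _x in Ioc (((j:ℝ)+1)/i) (((j:ℝ)+2)/i), fβ β (((j:ℝ)+1)/i)
      = fβ β (((j:ℝ)+1)/i) * (1/(i:ℝ)) := by
    rw [setIntegral_const, Real.volume_real_Ioc_of_le (by rw [← sub_nonneg, hlen]; positivity), smul_eq_mul,
      hlen, mul_comm]
  rw [← hconst]
  apply setIntegral_mono_on
  · exact (fint hβ hβ1).mono_set (fun x hx => lt_of_le_of_lt (by positivity) hx.1)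
  · exact integrableOn_const (by rw [Real.volume_Ioc]; exact ENNReal.ofReal_ne_top)
  · exact measurableSet_Ioc
  · intro x hx
    exact fanti hβ0 (mem_Ioi.2 (by positivity))
      (mem_Ioi.2 (lt_of_le_of_lt (by positivity : (0:ℝ) ≤ ((j:ℝ)+1)/i) hx.1)) hx.1.le

lemma sum_range_le (hβ : 1/2 < β) (hβ1 : β < 1) {i : ℕ} (hi : 1 ≤ i) (n : ℕ) :
    ∑ j ∈ Finset.range n, fβ β (((j:ℝ)+1)/i) * (1/(i:ℝ)) ≤ ∫ x in Ioi (0:ℝ), fβ β x := by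
  have hi' : (0:ℝ) < i := by exact_mod_cast hi
  calc ∑ j ∈ Finset.range n, fβ β (((j:ℝ)+1)/i) * (1/(i:ℝ))
      ≤ ∑ j ∈ Finset.range n, ∫ x in Ioc ((j:ℝ)/i) (((j:ℝ)+1)/i), fβ β x :=
        Finset.sum_le_sum (fun j _ => step_le hβ hβ1 hi j)
    _ = ∫ x in ⋃ j ∈ Finset.range n, Ioc ((j:ℝ)/i) (((j:ℝ)+1)/i), fβ β x := by
        rw [integral_biUnion_finset]
        · intro j _; exact measurableSet_Ioc
        · intro j _ k _ hjk
          rw [Function.onFun, Set.Ioc_disjoint_Ioc]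
          rcases lt_or_gt_of_ne hjk with h | h
          · refine le_trans (min_le_left _ _) (le_trans ?_ (le_max_right _ _))
            have : (j:ℝ) + 1 ≤ (k:ℝ) := by exact_mod_cast h
            apply div_le_div_of_nonneg_right this hi'.le |>.trans_eq rfl
          · refine le_trans (min_le_right _ _) (le_trans ?_ (le_max_left _ _))
            have : (k:ℝ) + 1 ≤ (j:ℝ) := by exact_mod_cast h
            exact div_le_div_of_nonneg_right this hi'.le |>.trans_eq rfl
        · intro j _
          exact (fint hβ hβ1).mono_set (fun x hx => lt_of_le_of_lt (by positivity) hx.1)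
    _ ≤ ∫ x in Ioi (0:ℝ), fβ β x := by
        apply setIntegral_mono_set (fint hβ hβ1)
        · filter_upwards [ae_restrict_mem measurableSet_Ioi] with x hx
          exact fnonneg x (le_of_lt hx)
        · apply HasSubset.Subset.eventuallyLE
          intro x hx
          simp only [mem_iUnion] at hx
          obtain ⟨j, _, hj⟩ := hx
          exact lt_of_le_of_lt (by positivity) hj.1

lemma g_nonneg {i : ℕ} (j : ℕ) : 0 ≤ fβ β (((j:ℝ)+1)/i) * (1/(i:ℝ)) := by
  have h1 : (0:ℝ) ≤ ((j:ℝ)+1)/i := by positivity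
  have := fnonneg (β := β) (((j:ℝ)+1)/i) h1
  positivity

lemma g_summable (hβ : 1/2 < β) (hβ1 : β < 1) {i : ℕ} (hi : 1 ≤ i) :
    Summable (fun j : ℕ => fβ β (((j:ℝ)+1)/i) * (1/(i:ℝ))) :=
  summable_of_sum_range_le g_nonneg (sum_range_le hβ hβ1 hi)

lemma g_tsum_le (hβ : 1/2 < β) (hβ1 : β < 1) {i : ℕ} (hi : 1 ≤ i) :
    ∑' j : ℕ, fβ β (((j:ℝ)+1)/i) * (1/(i:ℝ)) ≤ ∫ x in Ioi (0:ℝ), fβ β x :=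
  Real.tsum_le_of_sum_range_le g_nonneg (sum_range_le hβ hβ1 hi)

lemma iUnion_shift {i : ℕ} (hi : 1 ≤ i) :
    ⋃ j : ℕ, Ioc (((j:ℝ)+1)/i) (((j:ℝ)+2)/i) = Ioi (1/(i:ℝ)) := by
  have hi' : (0:ℝ) < i := by exact_mod_cast hi
  ext x
  simp only [mem_iUnion, mem_Ioc, mem_Ioi]
  constructor
  · rintro ⟨j, h1, h2⟩
    calc 1/(i:ℝ) ≤ ((j:ℝ)+1)/i := by
          apply div_le_div_of_nonneg_right _ hi'.le |>.trans_eq rfl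
          linarith [Nat.cast_nonneg (α := ℝ) j]
      _ < x := h1
  · intro hx
    have hx0 : 0 < x := lt_trans (by positivity) hx
    have hxi : 1 < x * i := by
      rw [div_lt_iff₀ hi'] at hx; linarith
    set m := ⌈x * (i:ℝ)⌉₊ with hm
    have hm2 : 2 ≤ m := by
      have : 1 < m := Nat.lt_ceil.2 (by exact_mod_cast hxi)
      omega
    refine ⟨m - 2, ?_, ?_⟩
    · have hcast : ((m - 2 : ℕ) : ℝ) + 1 = (m:ℝ) - 1 := by
        have : ((m - 2 : ℕ) : ℝ) = (m:ℝ) - 2 := by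
          push_cast [Nat.cast_sub hm2]; ring
        rw [this]; ring
      rw [hcast, div_lt_iff₀ hi', sub_lt_iff_lt_add]
      have := Nat.ceil_lt_add_one (by positivity : (0:ℝ) ≤ x * i)
      calc (m:ℝ) < x * i + 1 := this
        _ = x * i + 1 := rfl
    · have hcast : ((m - 2 : ℕ) : ℝ) + 2 = (m:ℝ) := by
        push_cast [Nat.cast_sub hm2]; ring
      rw [hcast, le_div_iff₀ hi']
      exact Nat.le_ceil _

lemma lower_le (hβ : 1/2 < β) (hβ1 : β < 1) {i : ℕ} (hi : 1 ≤ i) :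
    ∫ x in Ioi (1/(i:ℝ)), fβ β x ≤ ∑' j : ℕ, fβ β (((j:ℝ)+1)/i) * (1/(i:ℝ)) := by
  have hi' : (0:ℝ) < i := by exact_mod_cast hi
  have hmeas : ∀ j : ℕ, MeasurableSet (Ioc (((j:ℝ)+1)/i) (((j:ℝ)+2)/i)) :=
    fun j => measurableSet_Ioc
  have hdisj : Pairwise (Function.onFun Disjoint fun j : ℕ => Ioc (((j:ℝ)+1)/i) (((j:ℝ)+2)/i)) := by
    intro j k hjk
    rw [Function.onFun, Set.Ioc_disjoint_Ioc]
    rcases lt_or_gt_of_ne hjk with h | h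
    · refine le_trans (min_le_left _ _) (le_trans ?_ (le_max_right _ _))
      have : (j:ℝ) + 2 ≤ (k:ℝ) + 1 := by
        have : (j:ℝ) + 1 ≤ (k:ℝ) := by exact_mod_cast h
        linarith
      exact div_le_div_of_nonneg_right this hi'.le |>.trans_eq rfl
    · refine le_trans (min_le_right _ _) (le_trans ?_ (le_max_left _ _))
      have : (k:ℝ) + 2 ≤ (j:ℝ) + 1 := by
        have : (k:ℝ) + 1 ≤ (j:ℝ) := by exact_mod_cast h
        linarith
      exact div_le_div_of_nonneg_right this hi'.le |>.trans_eq rfl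
  have hfi : IntegrableOn (fβ β) (⋃ j : ℕ, Ioc (((j:ℝ)+1)/i) (((j:ℝ)+2)/i)) := by
    rw [iUnion_shift hi]
    exact (fint hβ hβ1).mono_set (fun x hx => lt_of_le_of_lt (by positivity : (0:ℝ) ≤ 1/(i:ℝ)) hx)
  have hsum := hasSum_integral_iUnion hmeas hdisj hfi
  rw [← iUnion_shift hi, ← hsum.tsum_eq]
  exact Summable.tsum_le_tsum (fun j => le_step hβ hβ1 hi j) hsum.summable (g_summable hβ hβ1 hi)

lemma tendsto_lower (hβ : 1/2 < β) (hβ1 : β < 1) :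
    Tendsto (fun i : ℕ => ∫ x in Ioi (1/(i:ℝ)), fβ β x) atTop
      (nhds (∫ x in Ioi (0:ℝ), fβ β x)) := by
  have hmono : Monotone (fun k : ℕ => Ioi (1/((k:ℝ)+1))) := by
    intro k l hkl
    apply Ioi_subset_Ioi
    apply div_le_div_of_nonneg_left one_pos.le (by positivity)
    exact_mod_cast by omega
  have hunion : (⋃ k : ℕ, Ioi (1/((k:ℝ)+1))) = Ioi (0:ℝ) := by
    ext x
    simp only [mem_iUnion, mem_Ioi]
    constructor
    · rintro ⟨k, hk⟩; exact lt_trans (by positivity) hk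
    · intro hx
      obtain ⟨k, hk⟩ := exists_nat_gt (1/x)
      refine ⟨k, ?_⟩
      rw [div_lt_iff₀ (by positivity)]
      rw [div_lt_iff₀ hx] at hk
      nlinarith
  have := tendsto_setIntegral_of_monotone (fun k : ℕ => measurableSet_Ioi) hmono
    (by rw [hunion]; exact fint hβ hβ1)
  rw [hunion] at this
  have h2 : Tendsto (fun k : ℕ => ∫ x in Ioi (1/((k+1 : ℕ):ℝ)), fβ β x) atTop
      (nhds (∫ x in Ioi (0:ℝ), fβ β x)) := by
    convert this using 2
    push_cast
    rfl
  exact (tendsto_add_atTop_iff_nat 1).1 h2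

lemma Rlim (hβ : 1/2 < β) (hβ1 : β < 1) :
    Tendsto (fun i : ℕ => ∑' j : ℕ, fβ β (((j:ℝ)+1)/i) * (1/(i:ℝ))) atTop
      (nhds (∫ x in Ioi (0:ℝ), fβ β x)) := by
  apply tendsto_of_tendsto_of_tendsto_of_le_of_le' (tendsto_lower hβ hβ1) tendsto_const_nhds
  · filter_upwards [eventually_ge_atTop 1] with i hi
    exact lower_le hβ hβ1 hi
  · filter_upwards [eventually_ge_atTop 1] with i hi
    exact g_tsum_le hβ hβ1 hi

lemma Psummable (hβ : 1/2 < β) (i : ℕ) :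
    Summable (fun j : ℕ => ((j:ℝ))^(-β) * (((i:ℝ)+(j:ℝ)))^(-β)) := by
  apply (summable_nat_add_iff 1).1
  have hs : Summable (fun n : ℕ => (((n:ℝ)+1))^(-(2*β))) := by
    have := (Real.summable_nat_rpow (p := -(2*β))).2 (by linarith)
    have h2 := (summable_nat_add_iff 1).2 this
    apply h2.congr
    intro n; push_cast; rfl
  apply Summable.of_nonneg_of_le _ _ hs
  · intro n
    have h1 : (0:ℝ) ≤ ((n:ℝ)+1) := by positivity
    have := Real.rpow_nonneg h1 (-β)
    have := Real.rpow_nonneg (by positivity : (0:ℝ) ≤ (i:ℝ)+((n:ℝ)+1)) (-β)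
    push_cast
    positivity
  · intro n
    push_cast
    have hn1 : (0:ℝ) < (n:ℝ)+1 := by positivity
    calc ((n:ℝ)+1)^(-β) * ((i:ℝ)+((n:ℝ)+1))^(-β)
        ≤ ((n:ℝ)+1)^(-β) * ((n:ℝ)+1)^(-β) := by
          apply mul_le_mul_of_nonneg_left _ (Real.rpow_nonneg hn1.le _)
          exact Real.rpow_le_rpow_of_nonpos hn1 (by linarith [Nat.cast_nonneg (α := ℝ) i])
            (by linarith)
      _ = ((n:ℝ)+1)^(-(2*β)) := by
          rw [← Real.rpow_add hn1]; ring_nf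

lemma aux_lim (hβ : 1/2 < β) (hβ1 : β < 1) (C : ℝ) (hC : 0 ≤ C) (g : ℕ → ℝ)
    (hg0 : ∀ i, 0 ≤ g i) (hgle : ∀ i : ℕ, 1 ≤ i → g i ≤ C * (i:ℝ)^(-β)) :
    Tendsto (fun i : ℕ => g i * (i:ℝ)^(2*β-1)) atTop (nhds 0) := by
  have hlim : Tendsto (fun i : ℕ => C * (i:ℝ)^(β-1)) atTop (nhds 0) := by
    have h1 : Tendsto (fun x : ℝ => x ^ (-(1-β))) atTop (nhds 0) :=
      tendsto_rpow_neg_atTop (by linarith)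
    have h2 : Tendsto (fun i : ℕ => ((i:ℝ)) ^ (-(1-β))) atTop (nhds 0) :=
      h1.comp tendsto_natCast_atTop_atTop
    have h3 : Tendsto (fun i : ℕ => C * ((i:ℝ)) ^ (-(1-β))) atTop (nhds (C * 0)) :=
      h2.const_mul C
    rw [mul_zero] at h3
    apply h3.congr
    intro i; ring_nf
  apply tendsto_of_tendsto_of_tendsto_of_le_of_le' tendsto_const_nhds hlim
  · filter_upwards with i
    exact mul_nonneg (hg0 i) (Real.rpow_nonneg (Nat.cast_nonneg i) _)
  · filter_upwards [eventually_ge_atTop 1] with i hi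
    have hi' : (0:ℝ) < i := by exact_mod_cast hi
    calc g i * (i:ℝ)^(2*β-1) ≤ C * (i:ℝ)^(-β) * (i:ℝ)^(2*β-1) := by
          apply mul_le_mul_of_nonneg_right (hgle i hi)
            (Real.rpow_nonneg (Nat.cast_nonneg i) _)
      _ = C * (i:ℝ)^(β-1) := by
          rw [mul_assoc, ← Real.rpow_add hi']
          ring_nf

lemma Tlim (hβ : 1/2 < β) (hβ1 : β < 1) :
    Tendsto (fun i : ℕ => (∑' j : ℕ, ((j:ℝ))^(-β) * (((i:ℝ)+(j:ℝ)))^(-β)) * (i:ℝ)^(2*β-1))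
      atTop (nhds (∫ x in Ioi (0:ℝ), fβ β x)) := by
  have hβ0 : 0 < β := by linarith
  apply (Rlim hβ hβ1).congr'
  filter_upwards [eventually_ge_atTop 1] with i hi
  have hi' : (0:ℝ) < i := by exact_mod_cast hi
  have hkey : ∀ x : ℝ, 0 ≤ x → (x / i)^(-β) = x^(-β) * (i:ℝ)^β := by
    intro x hx
    rw [Real.div_rpow hx hi'.le, Real.rpow_neg hi'.le, div_inv_eq_mul]
  have hterm : ∀ j : ℕ, fβ β (((j:ℝ)+1)/i) * (1/(i:ℝ))
      = (((j:ℝ)+1))^(-β) * (((i:ℝ)+((j:ℝ)+1)))^(-β) * (i:ℝ)^(2*β-1) := by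
    intro j
    have e1 : (1 : ℝ) + ((j:ℝ)+1)/i = ((i:ℝ)+((j:ℝ)+1))/i := by field_simp
    simp only [fβ, e1]
    rw [hkey _ (by positivity), hkey _ (by positivity)]
    have hpow : (i:ℝ)^β * (i:ℝ)^β * (i:ℝ)⁻¹ = (i:ℝ)^(2*β-1) := by
      rw [← Real.rpow_neg_one (i:ℝ), ← Real.rpow_add hi', ← Real.rpow_add hi']
      ring_nf
    calc ((j:ℝ)+1)^(-β) * (i:ℝ)^β * (((i:ℝ)+((j:ℝ)+1))^(-β) * (i:ℝ)^β) * (1/(i:ℝ))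
        = ((j:ℝ)+1)^(-β) * ((i:ℝ)+((j:ℝ)+1))^(-β) * ((i:ℝ)^β * (i:ℝ)^β * (i:ℝ)⁻¹) := by ring
      _ = ((j:ℝ)+1)^(-β) * ((i:ℝ)+((j:ℝ)+1))^(-β) * (i:ℝ)^(2*β-1) := by rw [hpow]
  have hsplit : ∑' j : ℕ, ((j:ℝ))^(-β) * (((i:ℝ)+(j:ℝ)))^(-β)
      = ∑' j : ℕ, (((j:ℝ)+1))^(-β) * (((i:ℝ)+((j:ℝ)+1)))^(-β) := by
    rw [Summable.tsum_eq_zero_add (Psummable hβ i)]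
    simp only [Nat.cast_zero, Real.zero_rpow (by linarith : -β ≠ 0), zero_mul, zero_add]
    congr 1
    funext n; push_cast; ring_nf
  rw [hsplit, ← tsum_mul_right]
  exact tsum_congr fun j => hterm j

lemma abound (hβ0 : 0 < β) {a : ℕ → ℝ}
    (ha : Tendsto (fun j : ℕ => a j * (j : ℝ) ^ β) atTop (nhds 1)) :
    ∃ M : ℝ, 1 ≤ M ∧ ∀ j : ℕ, 1 ≤ j → a j ≤ M * (j:ℝ)^(-β) := by
  obtain ⟨M₀, hM₀⟩ := ha.bddAbove_range
  refine ⟨max M₀ 1, le_max_right _ _, ?_⟩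
  intro j hj
  have hj' : (0:ℝ) < j := by exact_mod_cast hj
  have h1 : a j * (j:ℝ)^β ≤ max M₀ 1 :=
    le_trans (hM₀ (Set.mem_range_self j)) (le_max_left _ _)
  have h2 : a j = (a j * (j:ℝ)^β) * (j:ℝ)^(-β) := by
    rw [mul_assoc, ← Real.rpow_add hj', add_neg_cancel, Real.rpow_zero, mul_one]
  rw [h2]
  exact mul_le_mul_of_nonneg_right h1 (Real.rpow_nonneg hj'.le _)

lemma asummable (hβ : 1/2 < β) {a : ℕ → ℝ} (hnn : ∀ j, 0 ≤ a j) {M : ℝ} (hM1 : 1 ≤ M)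
    (hMle : ∀ j : ℕ, 1 ≤ j → a j ≤ M * (j:ℝ)^(-β)) (i : ℕ) :
    Summable (fun j : ℕ => a j * a (i + j)) := by
  apply (summable_nat_add_iff 1).1
  have hs : Summable (fun n : ℕ => (M*M) * (((n:ℝ)+1))^(-(2*β))) := by
    apply Summable.mul_left
    have := (Real.summable_nat_rpow (p := -(2*β))).2 (by linarith)
    have h2 := (summable_nat_add_iff 1).2 this
    apply h2.congr
    intro n; push_cast; rfl
  apply Summable.of_nonneg_of_le _ _ hs
  · intro n; exact mul_nonneg (hnn _) (hnn _)
  · intro n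
    have hn1 : (0:ℝ) < (n:ℝ)+1 := by positivity
    have hin1 : (0:ℝ) < ((i:ℝ)+(n:ℝ))+1 := by positivity
    have c1 : a (n+1) ≤ M * ((n:ℝ)+1)^(-β) := by
      have := hMle (n+1) (by omega)
      push_cast at this ⊢
      exact this
    have c2 : a (i+(n+1)) ≤ M * (((n:ℝ)+1))^(-β) := by
      have := hMle (i+(n+1)) (by omega)
      push_cast at this
      calc a (i+(n+1)) ≤ M * (((i:ℝ)+((n:ℝ)+1)))^(-β) := this
        _ ≤ M * (((n:ℝ)+1))^(-β) := by
            apply mul_le_mul_of_nonneg_left _ (by linarith)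
            exact Real.rpow_le_rpow_of_nonpos hn1
              (by linarith [Nat.cast_nonneg (α := ℝ) i]) (by linarith)
    calc a (n+1) * a (i+(n+1))
        ≤ (M * ((n:ℝ)+1)^(-β)) * (M * ((n:ℝ)+1)^(-β)) := by
          apply mul_le_mul c1 c2 (hnn _) (by have := Real.rpow_nonneg hn1.le (-β); positivity)
      _ = (M*M) * (((n:ℝ)+1)^(-β) * ((n:ℝ)+1)^(-β)) := by ring
      _ = (M*M) * (((n:ℝ)+1))^(-(2*β)) := by
          rw [← Real.rpow_add hn1]; ring_nf


lemma arith_key {c ε δ ν x y z w : ℝ}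
    (hc : 0 < c) (hε : 0 < ε)
    (hδ : 0 < δ) (hδ1 : δ ≤ 1) (hδε : 6*δ*(c+1) ≤ ε)
    (hν : 0 < ν) (hνε : ν ≤ ε/20) (hνc : ν ≤ c/2)
    (hx : |x - c| < ν) (hy : 0 ≤ y) (hy' : y < ν) (hz : 0 ≤ z) (hz' : z < ν)
    (hw_le : w ≤ (1+δ)^2 * (x - y)) (hw_ge : (1-δ)^2 * (x - y) ≤ w) :
    |z + w - c| < ε := by
  rw [abs_lt] at hx ⊢
  have hδc1 : δ * (c+1) ≤ ε/6 := by linarith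
  constructor
  · -- lower
    have h5 : c - 2*ν < x - y := by linarith
    have h6 : 0 ≤ c - 2*ν := by linarith
    have h7 : (1-δ)^2 * (c-2*ν) ≤ w := by
      refine le_trans ?_ hw_ge
      exact mul_le_mul_of_nonneg_left h5.le (sq_nonneg _)
    have h8 : c - (1-δ)^2*(c-2*ν) ≤ 2*δ*c + 2*ν := by
      have e1 : (2*δ - δ^2) * (c - 2*ν) ≤ 2*δ*c := by
        have hA : 2*δ - δ^2 ≤ 2*δ := by nlinarith
        have hB : 0 ≤ 2*δ - δ^2 := by nlinarith
        nlinarith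
      nlinarith
    have hδc : 2*δ*c ≤ ε/3 := by nlinarith
    linarith
  · -- upper
    have h1 : x - y ≤ c + ν := by linarith
    have h2 : w ≤ (1+δ)^2*(c+ν) :=
      le_trans hw_le (mul_le_mul_of_nonneg_left h1 (sq_nonneg _))
    have h3 : (1+δ)^2*(c+ν) ≤ c + ν + 3*δ*(c+ν) := by
      have hA : δ^2 ≤ δ := by nlinarith
      have hB : 0 ≤ c + ν := by linarith
      nlinarith
    have hcν : c + ν ≤ (3/2)*(c+1) := by linarith
    have h4 : 3*δ*(c+ν) ≤ 3*δ*((3/2)*(c+1)) :=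
      mul_le_mul_of_nonneg_left hcν (by linarith)
    have h5 : 3*δ*((3/2)*(c+1)) = (3/4)*(6*δ*(c+1)) := by ring
    have h6 : 3*δ*(c+ν) ≤ (3/4)*ε := by
      rw [h5] at h4
      linarith
    linarith

set_option maxHeartbeats 1000000 in
theorem stmt_0 (β : ℝ) (hβ : 1/2 < β) (hβ1 : β < 1)
    (a : ℕ → ℝ) (hnn : ∀ j, 0 ≤ a j)
    (ha : Tendsto (fun j : ℕ => a j * (j : ℝ) ^ β) atTop (nhds 1)) :
    ∃ c : ℝ, 0 < c ∧
      c = ∫ x in Set.Ioi (0 : ℝ), x ^ (-β) * (1 + x) ^ (-β) ∧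
      Tendsto (fun i : ℕ => (∑' j : ℕ, a j * a (i + j)) / (i : ℝ) ^ (1 - 2 * β))
        atTop (nhds c) ∧
      ¬ Summable (fun i : ℕ => ∑' j : ℕ, a j * a (i + 1 + j)) := by
  have hβ0 : 0 < β := by linarith
  set c : ℝ := ∫ x in Set.Ioi (0:ℝ), fβ β x with hc
  have hcpos : 0 < c := cpos hβ hβ1
  obtain ⟨M, hM1, hMle⟩ := abound hβ0 ha
  have hasum : ∀ i, Summable (fun j : ℕ => a j * a (i + j)) := asummable hβ hnn hM1 hMle
  -- the key limit in multiplied form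
  have K : Tendsto (fun i : ℕ => (∑' j : ℕ, a j * a (i + j)) * (i:ℝ)^(2*β-1))
      atTop (nhds c) := by
    rw [Metric.tendsto_nhds]
    intro ε hε
    set δ : ℝ := min 1 (ε/(6*(c+1))) with hδdef
    have hδpos : 0 < δ := lt_min one_pos (by positivity)
    have hδ1 : δ ≤ 1 := min_le_left _ _
    have hδε : 6*δ*(c+1) ≤ ε := by
      have h := min_le_right 1 (ε/(6*(c+1)))
      rw [le_div_iff₀ (by positivity)] at h
      calc 6*δ*(c+1) = δ * (6*(c+1)) := by ring
        _ ≤ ε := h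
    obtain ⟨N₀, hN₀⟩ := (Metric.tendsto_atTop.1 ha) δ hδpos
    set N : ℕ := max N₀ 1 with hNdef
    have hax : ∀ j : ℕ, N ≤ j → (1-δ) * (j:ℝ)^(-β) ≤ a j ∧ a j ≤ (1+δ) * (j:ℝ)^(-β) := by
      intro j hj
      have hj1 : 1 ≤ j := le_trans (le_max_right _ _) hj
      have hj' : (0:ℝ) < j := by exact_mod_cast hj1
      have hd := hN₀ j (le_trans (le_max_left _ _) hj)
      rw [Real.dist_eq, abs_lt] at hd
      have heq : a j = (a j * (j:ℝ)^β) * (j:ℝ)^(-β) := by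
        rw [mul_assoc, ← Real.rpow_add hj', add_neg_cancel, Real.rpow_zero, mul_one]
      constructor
      · rw [heq]
        exact mul_le_mul_of_nonneg_right (by linarith [hd.1]) (Real.rpow_nonneg hj'.le _)
      · rw [heq]
        exact mul_le_mul_of_nonneg_right (by linarith [hd.2]) (Real.rpow_nonneg hj'.le _)
    -- head limits
    have hhead : Tendsto (fun i : ℕ =>
        (∑ j ∈ Finset.range N, a j * a (i + j)) * (i:ℝ)^(2*β-1)) atTop (nhds 0) := by
      have h0 : Tendsto (fun i : ℕ =>
          ∑ j ∈ Finset.range N, (a j * a (i + j) * (i:ℝ)^(2*β-1))) atTop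
          (nhds (∑ _j ∈ Finset.range N, (0:ℝ))) := by
        apply tendsto_finset_sum
        intro j _
        apply aux_lim hβ hβ1 (a j * M) (mul_nonneg (hnn j) (by linarith))
        · intro i; exact mul_nonneg (hnn j) (hnn _)
        · intro i hi
          have hi' : (0:ℝ) < i := by exact_mod_cast hi
          have hb : a (i + j) ≤ M * (i:ℝ)^(-β) := by
            have h1 := hMle (i+j) (by omega)
            push_cast at h1
            calc a (i+j) ≤ M * ((i:ℝ)+(j:ℝ))^(-β) := h1
              _ ≤ M * (i:ℝ)^(-β) := by
                  apply mul_le_mul_of_nonneg_left _ (by linarith)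
                  exact Real.rpow_le_rpow_of_nonpos hi'
                    (by linarith [Nat.cast_nonneg (α := ℝ) j]) (by linarith)
          calc a j * a (i+j) ≤ a j * (M * (i:ℝ)^(-β)) :=
                mul_le_mul_of_nonneg_left hb (hnn j)
            _ = a j * M * (i:ℝ)^(-β) := by ring
      simp only [Finset.sum_const, smul_zero] at h0
      apply h0.congr
      intro i
      rw [Finset.sum_mul]
    have hHd : Tendsto (fun i : ℕ =>
        (∑ j ∈ Finset.range N, ((j:ℝ))^(-β) * (((i:ℝ)+(j:ℝ)))^(-β)) * (i:ℝ)^(2*β-1))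
        atTop (nhds 0) := by
      have h0 : Tendsto (fun i : ℕ =>
          ∑ j ∈ Finset.range N, (((j:ℝ))^(-β) * (((i:ℝ)+(j:ℝ)))^(-β) * (i:ℝ)^(2*β-1)))
          atTop (nhds (∑ _j ∈ Finset.range N, (0:ℝ))) := by
        apply tendsto_finset_sum
        intro j _
        apply aux_lim hβ hβ1 ((j:ℝ)^(-β)) (Real.rpow_nonneg (Nat.cast_nonneg j) _)
        · intro i
          exact mul_nonneg (Real.rpow_nonneg (Nat.cast_nonneg j) _)
            (Real.rpow_nonneg (by positivity) _)
        · intro i hi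
          have hi' : (0:ℝ) < i := by exact_mod_cast hi
          apply mul_le_mul_of_nonneg_left _ (Real.rpow_nonneg (Nat.cast_nonneg j) _)
          exact Real.rpow_le_rpow_of_nonpos hi'
            (by linarith [Nat.cast_nonneg (α := ℝ) j]) (by linarith)
      simp only [Finset.sum_const, smul_zero] at h0
      apply h0.congr
      intro i
      rw [Finset.sum_mul]
    have hT := Tlim hβ hβ1 (β := β)
    set ν : ℝ := min (ε/20) (c/2) with hνdef
    have hνpos : 0 < ν := lt_min (by positivity) (by positivity)
    have hνε : ν ≤ ε/20 := min_le_left _ _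
    have hνc : ν ≤ c/2 := min_le_right _ _
    have hTev := Metric.tendsto_nhds.1 hT ν hνpos
    have hheadev := Metric.tendsto_nhds.1 hhead ν hνpos
    have hHdev := Metric.tendsto_nhds.1 hHd ν hνpos
    filter_upwards [hTev, hheadev, hHdev, eventually_ge_atTop 1] with i h1 h2 h3 hi1
    have hi' : (0:ℝ) < i := by exact_mod_cast hi1
    set m : ℝ := (i:ℝ)^(2*β-1) with hm
    have hm0 : 0 ≤ m := Real.rpow_nonneg hi'.le _
    -- splits
    have hsplitG := Summable.sum_add_tsum_nat_add (f := fun j : ℕ => a j * a (i + j)) N (hasum i)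
    have hsplitT := Summable.sum_add_tsum_nat_add
      (f := fun j : ℕ => ((j:ℝ))^(-β) * (((i:ℝ)+(j:ℝ)))^(-β)) N (Psummable hβ i)
    set G : ℝ := ∑' j : ℕ, a j * a (i + j) with hG
    set T : ℝ := ∑' j : ℕ, ((j:ℝ))^(-β) * (((i:ℝ)+(j:ℝ)))^(-β) with hTdef
    set Hd : ℝ := ∑ j ∈ Finset.range N, ((j:ℝ))^(-β) * (((i:ℝ)+(j:ℝ)))^(-β) with hHddef
    set hd : ℝ := ∑ j ∈ Finset.range N, a j * a (i + j) with hhddef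
    set tailP : ℝ := ∑' k : ℕ, (((k+N:ℕ):ℝ))^(-β) * (((i:ℝ)+((k+N:ℕ):ℝ)))^(-β) with htailP
    set tailA : ℝ := ∑' k : ℕ, a (k+N) * a (i + (k+N)) with htailA
    have hGsplit : hd + tailA = G := hsplitG
    have hTsplit : Hd + tailP = T := hsplitT
    -- summabilities of tails
    have hsumA : Summable (fun k : ℕ => a (k+N) * a (i + (k+N))) :=
      (summable_nat_add_iff N).2 (hasum i)
    have hsumP : Summable (fun k : ℕ => (((k+N:ℕ):ℝ))^(-β) * (((i:ℝ)+((k+N:ℕ):ℝ)))^(-β)) :=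
      (summable_nat_add_iff N).2 (Psummable hβ i)
    -- tail comparison
    have hPnn : ∀ k : ℕ, 0 ≤ (((k+N:ℕ):ℝ))^(-β) * (((i:ℝ)+((k+N:ℕ):ℝ)))^(-β) := by
      intro k
      exact mul_nonneg (Real.rpow_nonneg (Nat.cast_nonneg _) _)
        (Real.rpow_nonneg (by positivity) _)
    have htail_le : tailA ≤ (1+δ)^2 * tailP := by
      rw [htailA, htailP, ← tsum_mul_left]
      apply Summable.tsum_le_tsum _ hsumA (hsumP.mul_left _)
      intro k
      have hk1 := hax (k+N) (by omega)
      have hk2 : (1-δ) * (((i:ℝ)+((k+N:ℕ):ℝ)))^(-β) ≤ a (i+(k+N)) ∧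
          a (i+(k+N)) ≤ (1+δ) * (((i:ℝ)+((k+N:ℕ):ℝ)))^(-β) := by
        have := hax (i+(k+N)) (by omega)
        push_cast at this ⊢
        convert this using 3 <;> push_cast <;> ring
      calc a (k+N) * a (i+(k+N))
          ≤ ((1+δ) * (((k+N:ℕ):ℝ))^(-β)) * ((1+δ) * (((i:ℝ)+((k+N:ℕ):ℝ)))^(-β)) := by
            apply mul_le_mul hk1.2 hk2.2 (hnn _)
            positivity
        _ = (1+δ)^2 * ((((k+N:ℕ):ℝ))^(-β) * (((i:ℝ)+((k+N:ℕ):ℝ)))^(-β)) := by ring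
    have htail_ge : (1-δ)^2 * tailP ≤ tailA := by
      rw [htailA, htailP, ← tsum_mul_left]
      apply Summable.tsum_le_tsum _ (hsumP.mul_left _) hsumA
      intro k
      have hk1 := hax (k+N) (by omega)
      have hk2 : (1-δ) * (((i:ℝ)+((k+N:ℕ):ℝ)))^(-β) ≤ a (i+(k+N)) ∧
          a (i+(k+N)) ≤ (1+δ) * (((i:ℝ)+((k+N:ℕ):ℝ)))^(-β) := by
        have := hax (i+(k+N)) (by omega)
        push_cast at this ⊢
        convert this using 3 <;> push_cast <;> ring
      have h1δ : 0 ≤ 1 - δ := by linarith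
      calc (1-δ)^2 * ((((k+N:ℕ):ℝ))^(-β) * (((i:ℝ)+((k+N:ℕ):ℝ)))^(-β))
          = ((1-δ) * (((k+N:ℕ):ℝ))^(-β)) * ((1-δ) * (((i:ℝ)+((k+N:ℕ):ℝ)))^(-β)) := by ring
        _ ≤ a (k+N) * a (i+(k+N)) := by
            apply mul_le_mul hk1.1 hk2.1 (by positivity)
            exact hnn _
    have htailP0 : 0 ≤ tailP := tsum_nonneg hPnn
    have hhd0 : 0 ≤ hd := Finset.sum_nonneg (fun j _ => mul_nonneg (hnn _) (hnn _))
    have hHd0 : 0 ≤ Hd := Finset.sum_nonneg (fun j _ =>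
      mul_nonneg (Real.rpow_nonneg (Nat.cast_nonneg _) _) (Real.rpow_nonneg (by positivity) _))
    -- assemble
    have hGm : G * m = hd * m + tailA * m := by rw [← hGsplit]; ring
    have hTm : tailP * m = T * m - Hd * m := by rw [← hTsplit]; ring
    have hub : tailA * m ≤ (1+δ)^2 * (T * m - Hd * m) := by
      rw [← hTm]
      calc tailA * m ≤ ((1+δ)^2 * tailP) * m := mul_le_mul_of_nonneg_right htail_le hm0
        _ = (1+δ)^2 * (tailP * m) := by ring
    have hlb : (1-δ)^2 * (T * m - Hd * m) ≤ tailA * m := by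
      rw [← hTm]
      calc (1-δ)^2 * (tailP * m) = ((1-δ)^2 * tailP) * m := by ring
        _ ≤ tailA * m := mul_le_mul_of_nonneg_right htail_ge hm0
    have hhdm0 : 0 ≤ hd * m := mul_nonneg hhd0 hm0
    have hHdm0 : 0 ≤ Hd * m := mul_nonneg hHd0 hm0
    rw [Real.dist_eq] at h1 h2 h3 ⊢
    rw [sub_zero] at h2 h3
    rw [hGm]
    exact arith_key hcpos hε hδpos hδ1 hδε hνpos hνε hνc h1 hHdm0
      (lt_of_le_of_lt (le_abs_self _) h3) hhdm0
      (lt_of_le_of_lt (le_abs_self _) h2) hub hlb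
  -- convert to the division form
  have HT : Tendsto (fun i : ℕ => (∑' j : ℕ, a j * a (i + j)) / (i : ℝ) ^ (1 - 2 * β))
      atTop (nhds c) := by
    apply K.congr'
    filter_upwards [eventually_ge_atTop 1] with i hi
    have hi' : (0:ℝ) < i := by exact_mod_cast hi
    have hrw : (i:ℝ) ^ (1 - 2*β) = ((i:ℝ)^(2*β-1))⁻¹ := by
      rw [← Real.rpow_neg hi'.le]
      congr 1
      ring
    rw [hrw, div_inv_eq_mul]
  refine ⟨c, hcpos, rfl, HT, ?_⟩
  -- non-summability
  intro hs
  have hev : ∀ᶠ i : ℕ in atTop, c/2 < (∑' j : ℕ, a j * a (i + j)) / (i : ℝ) ^ (1 - 2 * β) :=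
    HT.eventually_const_lt (by linarith)
  obtain ⟨N₀, hN₀⟩ := (eventually_atTop.1 (hev.and (eventually_ge_atTop 1)))
  set N₁ : ℕ := N₀ + 1 with hN₁
  have hlow : ∀ i : ℕ, N₁ ≤ i → (c/2) * (i:ℝ)^(1-2*β) ≤ ∑' j : ℕ, a j * a (i + j) := by
    intro i hi
    obtain ⟨h1, h2⟩ := hN₀ i (by omega)
    have hi' : (0:ℝ) < i := by exact_mod_cast h2
    have hp : (0:ℝ) < (i:ℝ)^(1-2*β) := Real.rpow_pos_of_pos hi' _
    rw [lt_div_iff₀ hp] at h1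
    linarith
  have hs1 : Summable (fun k : ℕ => ∑' j : ℕ, a j * a (k + N₁ + 1 + j)) := by
    exact (summable_nat_add_iff (f := fun i : ℕ => ∑' j : ℕ, a j * a (i + 1 + j)) N₁).2 hs
  have hs2 : Summable (fun k : ℕ => (c/2) * (((k + N₁ + 1 : ℕ):ℝ))^(1-2*β)) := by
    apply Summable.of_nonneg_of_le _ _ hs1
    · intro k
      exact mul_nonneg (by positivity) (Real.rpow_nonneg (Nat.cast_nonneg _) _)
    · intro k
      have := hlow (k + N₁ + 1) (by omega)
      convert this using 3
  have hs3 : Summable (fun k : ℕ => (((k + N₁ + 1 : ℕ):ℝ))^(1-2*β)) := by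
    have h := hs2.mul_left (2/c)
    apply h.congr
    intro k
    field_simp
  have hs4 : Summable (fun n : ℕ => ((n:ℝ))^(1-2*β)) := by
    apply (summable_nat_add_iff (N₁+1)).1
    apply hs3.congr
    intro k
    congr 2
  have := Real.summable_nat_rpow.1 hs4
  linarith
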